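/- arXiv:2503.06739 — 9 statements merged into one kernel-verified Lean document; each statement's English description precedes it below -/
import Mathlib

section
/- Let L be a complete lattice. If a and b are μ-elements of L, then a ⊓ b is a μ-element of L. -/
/-- An element `x` of a complete lattice is a μ-element. -/
def IsMuElement {L : Type*} [CompleteLattice L] (x : L) : Prop :=
  ∀ y z : L, y ⊓ z ≠ ⊥ → x ⊓ y ≠ ⊥ → x ⊓ z ≠ ⊥ → x ⊓ (y ⊓ z) ≠ ⊥

/-- The meet of two μ-elements is a μ-element. -/
theorem isMuElement_inf {L : Type*} [CompleteLattice L] {a b : L}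
    (ha : IsMuElement a) (hb : IsMuElement b) : IsMuElement (a ⊓ b) := by
  intro y z hyz hy hz
  have hby : b ⊓ y ≠ ⊥ := fun h => hy (by rw [inf_assoc, h, inf_bot_eq])
  have hbz : b ⊓ z ≠ ⊥ := fun h => hz (by rw [inf_assoc, h, inf_bot_eq])
  have hbyz := hb y z hyz hby hbz
  have hkey : (b ⊓ y) ⊓ (b ⊓ z) = b ⊓ (y ⊓ z) := by
    rw [inf_inf_inf_comm, inf_idem]
  have hay : a ⊓ (b ⊓ y) ≠ ⊥ := by rwa [← inf_assoc]
  have haz : a ⊓ (b ⊓ z) ≠ ⊥ := by rwa [← inf_assoc]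
  have := ha (b ⊓ y) (b ⊓ z) (hkey ▸ hbyz) hay haz
  rwa [hkey, ← inf_assoc] at this
end

section
/- Let L be a complete lattice and n, n' ∈ L with n ≤ n'. If n is a μ-element in n'↓ and n' is a μ-element of L, then n is a μ-element of L. -/
/-- `a` is a μ-element in the downset of `b` (for `a ≤ b`). -/
def IsMuElementBelow {L : Type*} [CompleteLattice L] (a b : L) : Prop :=
  ∀ y z : L, y ≤ b → z ≤ b → y ⊓ z ≠ ⊥ → a ⊓ y ≠ ⊥ → a ⊓ z ≠ ⊥ → a ⊓ (y ⊓ z) ≠ ⊥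

/-- If `n ≤ n'`, `n` is a μ-element in `n'↓` and `n'` is a μ-element of `L`,
then `n` is a μ-element of `L`. -/
theorem isMuElement_of_isMuElementBelow {L : Type*} [CompleteLattice L] {n n' : L}
    (hle : n ≤ n') (h1 : IsMuElementBelow n n') (h2 : IsMuElement n') :
    IsMuElement n := by
  intro y z hyz hny hnz
  have hny' : n ⊓ (n' ⊓ y) = n ⊓ y := by
    rw [← inf_assoc, inf_eq_left.mpr hle]
  have hnz' : n ⊓ (n' ⊓ z) = n ⊓ z := by
    rw [← inf_assoc, inf_eq_left.mpr hle]
  have hn'y : n' ⊓ y ≠ ⊥ := fun h => hny (le_bot_iff.mp (hny' ▸ (h ▸ inf_le_right : n ⊓ (n' ⊓ y) ≤ ⊥)))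
  have hn'z : n' ⊓ z ≠ ⊥ := fun h => hnz (le_bot_iff.mp (hnz' ▸ (h ▸ inf_le_right : n ⊓ (n' ⊓ z) ≤ ⊥)))
  have key : (n' ⊓ y) ⊓ (n' ⊓ z) ≠ ⊥ := by
    have := h2 y z hyz hn'y hn'z
    intro h
    apply this
    have : n' ⊓ (y ⊓ z) ≤ (n' ⊓ y) ⊓ (n' ⊓ z) := le_inf (inf_le_inf_left _ inf_le_left) (inf_le_inf_left _ inf_le_right)
    exact le_bot_iff.mp (h ▸ this)
  have := h1 (n' ⊓ y) (n' ⊓ z) inf_le_left inf_le_left key (hny' ▸ hny) (hnz' ▸ hnz)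
  intro h
  apply this
  have : n ⊓ ((n' ⊓ y) ⊓ (n' ⊓ z)) ≤ n ⊓ (y ⊓ z) :=
    inf_le_inf_left _ (inf_le_inf inf_le_right inf_le_right)
  exact le_bot_iff.mp (h ▸ this)
end

section
/- Let L be a complete lattice and a₁, a₂, b₁, b₂ ∈ L with a₁ ≤ b₁ and a₂ ≤ b₂. If a₁ is a μ-element in b₁↓ and a₂ is a μ-element in b₂↓, then a₁ ⊓ a₂ is a μ-element in (b₁ ⊓ b₂)↓. -/
/-- If `a₁` is a μ-element in `b₁↓` and `a₂` is a μ-element in `b₂↓`, then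
`a₁ ⊓ a₂` is a μ-element in `(b₁ ⊓ b₂)↓`. -/
theorem isMuElementBelow_inf {L : Type*} [CompleteLattice L] {a₁ a₂ b₁ b₂ : L}
    (h₁ : a₁ ≤ b₁) (h₂ : a₂ ≤ b₂)
    (hm₁ : IsMuElementBelow a₁ b₁) (hm₂ : IsMuElementBelow a₂ b₂) :
    IsMuElementBelow (a₁ ⊓ a₂) (b₁ ⊓ b₂) := by
  intro y z hy hz hyz h1 h2
  have hy1 : y ≤ b₁ := le_trans hy inf_le_left
  have hy2 : y ≤ b₂ := le_trans hy inf_le_right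
  have hz1 : z ≤ b₁ := le_trans hz inf_le_left
  have hz2 : z ≤ b₂ := le_trans hz inf_le_right
  -- a₂ ⊓ y ≠ ⊥ and a₂ ⊓ z ≠ ⊥
  have ha2y : a₂ ⊓ y ≠ ⊥ := fun h => h1 (le_bot_iff.mp (by
    calc a₁ ⊓ a₂ ⊓ y ≤ a₂ ⊓ y := by gcongr; exact inf_le_right
    _ = ⊥ := h))
  have ha2z : a₂ ⊓ z ≠ ⊥ := fun h => h2 (le_bot_iff.mp (by
    calc a₁ ⊓ a₂ ⊓ z ≤ a₂ ⊓ z := by gcongr; exact inf_le_right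
    _ = ⊥ := h))
  have key2 : a₂ ⊓ (y ⊓ z) ≠ ⊥ := hm₂ y z hy2 hz2 hyz ha2y ha2z
  -- apply hm₁ to y' = a₂ ⊓ y, z' = a₂ ⊓ z
  have hy' : a₂ ⊓ y ≤ b₁ := le_trans inf_le_right hy1
  have hz' : a₂ ⊓ z ≤ b₁ := le_trans inf_le_right hz1
  have hinf : (a₂ ⊓ y) ⊓ (a₂ ⊓ z) = a₂ ⊓ (y ⊓ z) := by
    rw [← inf_inf_distrib_left]
  have ha1y : a₁ ⊓ (a₂ ⊓ y) ≠ ⊥ := by rwa [← inf_assoc]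
  have ha1z : a₁ ⊓ (a₂ ⊓ z) ≠ ⊥ := by rwa [← inf_assoc]
  have := hm₁ (a₂ ⊓ y) (a₂ ⊓ z) hy' hz' (hinf ▸ key2) ha1y ha1z
  rwa [hinf, ← inf_assoc] at this
end

section
/- Let L be a complete lattice whose underlying lattice is distributive. Let a, n ∈ L with a ≤ n, and let b be a μ-complement of a in L (i.e. a ⊓ b = ⊥ and a ⊔ b is a μ-element of L). Then b ⊓ n is a μ-complement of a in n↓; that is, a ⊓ (b ⊓ n) = ⊥ and a ⊔ (b ⊓ n) is a μ-element in n↓. -/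
/-- In a distributive complete lattice, if `a ≤ n` and `b` is a μ-complement
of `a` in `L`, then `b ⊓ n` is a μ-complement of `a` in `n↓`. -/
theorem muComplement_inf {L : Type*} [CompleteLattice L]
    (hdistrib : ∀ x y z : L, x ⊓ (y ⊔ z) = (x ⊓ y) ⊔ (x ⊓ z))
    {a n b : L} (han : a ≤ n) (hab : a ⊓ b = ⊥) (hmu : IsMuElement (a ⊔ b)) :
    a ⊓ (b ⊓ n) = ⊥ ∧ IsMuElementBelow (a ⊔ b ⊓ n) n := by
  have key : ∀ y : L, y ≤ n → (a ⊔ b ⊓ n) ⊓ y = (a ⊔ b) ⊓ y := by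
    intro y hy
    have h1 : y ⊓ (b ⊓ n) = y ⊓ b := by
      rw [← inf_assoc]
      exact inf_eq_left.mpr (le_trans inf_le_left hy)
    calc (a ⊔ b ⊓ n) ⊓ y = y ⊓ (a ⊔ b ⊓ n) := inf_comm _ _
      _ = y ⊓ a ⊔ y ⊓ (b ⊓ n) := hdistrib _ _ _
      _ = y ⊓ a ⊔ y ⊓ b := by rw [h1]
      _ = y ⊓ (a ⊔ b) := (hdistrib _ _ _).symm
      _ = (a ⊔ b) ⊓ y := inf_comm _ _
  constructor
  · have : a ⊓ (b ⊓ n) ≤ a ⊓ b := inf_le_inf_left _ inf_le_left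
    exact le_antisymm (hab ▸ this) bot_le
  · intro y z hy hz hyz h1 h2
    rw [key y hy] at h1
    rw [key z hz] at h2
    rw [key (y ⊓ z) (le_trans inf_le_left hy)]
    exact hmu y z hyz h1 h2
end

section
/- Let L be a complete lattice that is modular. If x is a pseudo-complement of y in L (i.e. x ⊓ y = ⊥ and for all c ∈ L, y ⊓ c = ⊥ implies c ≤ x), then x is a μ-complement of y; that is, x ⊓ y = ⊥ and x ⊔ y is a μ-element of L. -/
/-- In a modular complete lattice, every pseudo-complement is a
μ-complement. -/
theorem pseudoComplement_isMuComplement {L : Type*} [CompleteLattice L]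
    (hmod : ∀ a b c : L, a ≤ c → a ⊔ (b ⊓ c) = (a ⊔ b) ⊓ c)
    {x y : L} (hxy : x ⊓ y = ⊥) (hmax : ∀ c : L, y ⊓ c = ⊥ → c ≤ x) :
    x ⊓ y = ⊥ ∧ IsMuElement (x ⊔ y) := by
  refine ⟨hxy, ?_⟩
  intro a b hab _ _ h
  apply hab
  have hy : y ⊓ (a ⊓ b) = ⊥ := by
    have : y ⊓ (a ⊓ b) ≤ (x ⊔ y) ⊓ (a ⊓ b) :=
      inf_le_inf_right _ le_sup_right
    exact le_bot_iff.mp (h ▸ this)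
  have hx : a ⊓ b ≤ x := hmax _ hy
  have : a ⊓ b ≤ (x ⊔ y) ⊓ (a ⊓ b) :=
    le_inf (hx.trans le_sup_left) le_rfl
  exact le_bot_iff.mp (h ▸ this)
end

section
/- Let n ≥ 2 be a natural number and let l be an integer, and set d = gcd(l, n) (so that the ideal of ℤ/nℤ generated by l equals the ideal generated by d). In the complete lattice of ideals of the ring ℤ/nℤ, the ideal x generated by l is a μ-element if and only if there do NOT exist primes p, q, s dividing n with p ≠ q such that the p-adic valuation of d is strictly less than the p-adic valuation of n, the q-adic valuation of d is strictly less than the q-adic valuation of n, and the s-adic valuation of d equals the s-adic valuation of n. Moreover, x is essential if and only if for every prime p dividing n, the p-adic valuation of d is strictly less than the p-adic valuation of n. -/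
section aux
variable {n : ℕ} [NeZero n]

lemma span_nat_eq_bot {a : ℕ} : Ideal.span {(a : ZMod n)} = (⊥ : Ideal (ZMod n)) ↔ n ∣ a := by
  rw [Ideal.span_singleton_eq_bot, ZMod.natCast_eq_zero_iff]

lemma span_intCast_eq_gcd (l : ℤ) :
    Ideal.span {(l : ZMod n)} = Ideal.span {((Int.gcd l n : ℕ) : ZMod n)} := by
  apply le_antisymm
  · rw [Ideal.span_singleton_le_span_singleton]
    have := map_dvd (Int.castRingHom (ZMod n)) (Int.gcd_dvd_left (a := l) (b := (n : ℤ)))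
    simpa using this
  · rw [Ideal.span_singleton_le_span_singleton]
    refine ⟨((Int.gcdA l n : ℤ) : ZMod n), ?_⟩
    have h := Int.gcd_eq_gcd_ab l (n : ℤ)
    calc ((Int.gcd l n : ℕ) : ZMod n) = ((Int.gcd l n : ℤ) : ZMod n) := by push_cast; ring
    _ = ((l * Int.gcdA l n + n * Int.gcdB l n : ℤ) : ZMod n) := by rw [← h]
    _ = (l : ZMod n) * ((Int.gcdA l n : ℤ) : ZMod n) := by
        push_cast
        simp [ZMod.natCast_self]
  
lemma span_natCast_eq_gcd (a : ℕ) :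
    Ideal.span {(a : ZMod n)} = Ideal.span {((Nat.gcd a n : ℕ) : ZMod n)} := by
  have := span_intCast_eq_gcd (n := n) (a : ℤ)
  simpa [Int.gcd_natCast_natCast] using this

lemma exists_span_divisor (I : Ideal (ZMod n)) : ∃ e : ℕ, e ∣ n ∧ I = Ideal.span {(e : ZMod n)} := by
  have hsurj : Function.Surjective (Int.castRingHom (ZMod n)) := ZMod.intCast_surjective
  obtain ⟨g, hg⟩ := (IsPrincipalIdealRing.principal (I.comap (Int.castRingHom (ZMod n)))).principal
  have hI : I = Ideal.span {(g : ZMod n)} := by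
    have h1 : I = (I.comap (Int.castRingHom (ZMod n))).map (Int.castRingHom (ZMod n)) :=
      (Ideal.map_comap_of_surjective _ hsurj I).symm
    rw [h1, hg]
    rw [show (Submodule.span ℤ {g} : Ideal ℤ) = Ideal.span {g} from rfl, Ideal.map_span]
    simp
  refine ⟨Int.gcd g n, ?_, ?_⟩
  · have : Int.gcd g n ∣ (n : ℤ).natAbs := Nat.gcd_dvd_right _ _
    simpa using this
  · rw [hI, span_intCast_eq_gcd]

lemma mem_span_nat {a : ℕ} (ha : a ∣ n) (m : ℕ) :
    (m : ZMod n) ∈ Ideal.span {(a : ZMod n)} ↔ a ∣ m := by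
  rw [Ideal.mem_span_singleton]
  constructor
  · rintro ⟨c, hc⟩
    have h2 : (m : ZMod n) = ((a * c.val : ℕ) : ZMod n) := by
      push_cast [ZMod.natCast_zmod_val]; exact hc
    have h3 := (ZMod.natCast_eq_natCast_iff _ _ _).mp h2
    have h4 : (n : ℤ) ∣ (a * c.val : ℕ) - (m : ℤ) := h3.dvd
    have h5 : (a : ℤ) ∣ (m : ℤ) := by
      have han : (a : ℤ) ∣ (n : ℤ) := Int.natCast_dvd_natCast.mpr ha
      have h7 := han.trans h4
      have h6 : (a : ℤ) ∣ ((a * c.val : ℕ) : ℤ) := by push_cast; exact Dvd.intro _ rfl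
      have := dvd_sub h6 h7
      simpa using this
    exact_mod_cast h5
  · rintro ⟨c, rfl⟩; exact ⟨(c : ZMod n), by push_cast; ring⟩

lemma span_inf_span {e f : ℕ} (he : e ∣ n) (hf : f ∣ n) :
    Ideal.span {(e : ZMod n)} ⊓ Ideal.span {(f : ZMod n)} =
      Ideal.span {((Nat.lcm e f : ℕ) : ZMod n)} := by
  ext x
  obtain ⟨m, rfl⟩ : ∃ m : ℕ, (m : ZMod n) = x := ⟨x.val, ZMod.natCast_zmod_val x⟩
  rw [Submodule.mem_inf, mem_span_nat he, mem_span_nat hf,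
    mem_span_nat (Nat.lcm_dvd he hf), Nat.lcm_dvd_iff]

end aux


section nt
variable {n : ℕ}

lemma not_dvd_iff_exists_prime (hn : n ≠ 0) {a : ℕ} (ha : a ∣ n) :
    ¬ n ∣ a ↔ ∃ p, p.Prime ∧ p ∣ n ∧ a.factorization p < n.factorization p := by
  have ha0 : a ≠ 0 := fun h => hn (by simpa [h] using ha)
  rw [← Nat.factorization_le_iff_dvd hn ha0, Finsupp.le_def]
  push_neg
  constructor
  · rintro ⟨p, hlt⟩
    have hpos : 0 < n.factorization p := lt_of_le_of_lt (Nat.zero_le _) hlt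
    have pp : p.Prime := by
      by_contra hnp
      rw [Nat.factorization_eq_zero_of_not_prime n hnp] at hpos
      omega
    exact ⟨p, pp, Nat.dvd_of_factorization_pos hpos.ne', hlt⟩
  · rintro ⟨p, _, _, hlt⟩
    exact ⟨p, hlt⟩

lemma lcm_fact {a b : ℕ} (ha : a ≠ 0) (hb : b ≠ 0) (p : ℕ) :
    (Nat.lcm a b).factorization p = max (a.factorization p) (b.factorization p) := by
  rw [Nat.factorization_lcm ha hb]
  rfl

lemma nt_essential (hn : 2 ≤ n) {d : ℕ} (hd : d ∣ n) :
    (∀ e, e ∣ n → ¬ n ∣ e → ¬ n ∣ Nat.lcm d e) ↔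
      ∀ p, p.Prime → p ∣ n → d.factorization p < n.factorization p := by
  have hn0 : n ≠ 0 := by omega
  have hd0 : d ≠ 0 := fun h => hn0 (by simpa [h] using hd)
  constructor
  · intro h p pp hpn
    by_contra hle
    push_neg at hle
    set e := ordCompl[p] n with he
    have heD : e ∣ n := Nat.ordCompl_dvd n p
    have he0 : e ≠ 0 := fun h' => hn0 (by simpa [h'] using heD)
    have hef : e.factorization = n.factorization.erase p := Nat.factorization_ordCompl n p
    have hne : ¬ n ∣ e := by
      rw [not_dvd_iff_exists_prime hn0 heD]
      refine ⟨p, pp, hpn, ?_⟩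
      rw [hef, Finsupp.erase_same]
      exact pp.factorization_pos_of_dvd hn0 hpn
    refine h e heD hne ?_
    rw [← Nat.factorization_le_iff_dvd hn0 (Nat.lcm_ne_zero hd0 he0), Finsupp.le_def]
    intro r
    rw [lcm_fact hd0 he0, hef]
    rcases eq_or_ne r p with rfl | hrp
    · exact le_max_of_le_left hle
    · rw [Finsupp.erase_ne hrp]
      exact le_max_right _ _
  · intro h e heD hne hcon
    obtain ⟨p, pp, hpn, hlt⟩ := (not_dvd_iff_exists_prime hn0 heD).mp hne
    have he0 : e ≠ 0 := fun h' => hn0 (by simpa [h'] using heD)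
    have := (Nat.factorization_le_iff_dvd hn0 (Nat.lcm_ne_zero hd0 he0)).mpr hcon p
    rw [lcm_fact hd0 he0] at this
    have := h p pp hpn
    omega

lemma nt_mu (hn : 2 ≤ n) {d : ℕ} (hd : d ∣ n) :
    (∃ e f, e ∣ n ∧ f ∣ n ∧ ¬ n ∣ Nat.lcm e f ∧ ¬ n ∣ Nat.lcm d e ∧ ¬ n ∣ Nat.lcm d f ∧
      n ∣ Nat.lcm d (Nat.lcm e f)) ↔
    ∃ p q s : ℕ, p.Prime ∧ q.Prime ∧ s.Prime ∧ p ∣ n ∧ q ∣ n ∧ s ∣ n ∧ p ≠ q ∧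
      d.factorization p < n.factorization p ∧ d.factorization q < n.factorization q ∧
      d.factorization s = n.factorization s := by
  have hn0 : n ≠ 0 := by omega
  have hd0 : d ≠ 0 := fun h => hn0 (by simpa [h] using hd)
  have hdle : ∀ r, d.factorization r ≤ n.factorization r :=
    fun r => (Nat.factorization_le_iff_dvd hd0 hn0).mpr hd r
  constructor
  · rintro ⟨e, f, he, hf, h1, h2, h3, h4⟩
    have he0 : e ≠ 0 := fun h' => hn0 (by simpa [h'] using he)
    have hf0 : f ≠ 0 := fun h' => hn0 (by simpa [h'] using hf)
    have hef0 : Nat.lcm e f ≠ 0 := Nat.lcm_ne_zero he0 hf0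
    have hdef0 : Nat.lcm d (Nat.lcm e f) ≠ 0 := Nat.lcm_ne_zero hd0 hef0
    have h4' := (Nat.factorization_le_iff_dvd hn0 hdef0).mpr h4
    obtain ⟨s, ss, hsn, hs⟩ := (not_dvd_iff_exists_prime hn0 (Nat.lcm_dvd he hf)).mp h1
    obtain ⟨p, pp, hpn, hp⟩ :=
      (not_dvd_iff_exists_prime hn0 (Nat.lcm_dvd hd he)).mp h2
    obtain ⟨q, qq, hqn, hq⟩ :=
      (not_dvd_iff_exists_prime hn0 (Nat.lcm_dvd hd hf)).mp h3
    rw [lcm_fact hd0 he0] at hp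
    rw [lcm_fact hd0 hf0] at hq
    rw [lcm_fact he0 hf0] at hs
    have hds : d.factorization s = n.factorization s := by
      have := h4' s
      rw [lcm_fact hd0 hef0, lcm_fact he0 hf0] at this
      have := hdle s
      omega
    have hpq : p ≠ q := by
      rintro rfl
      have := h4' p
      rw [lcm_fact hd0 hef0, lcm_fact he0 hf0] at this
      omega
    exact ⟨p, q, s, pp, qq, ss, hpn, hqn, hsn, hpq, (max_lt_iff.mp hp).1, (max_lt_iff.mp hq).1, hds⟩
  · rintro ⟨p, q, s, pp, qq, ss, hpn, hqn, hsn, hpq, hp, hq, hs⟩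
    have hps : p ≠ s := fun h => by rw [h, hs] at hp; omega
    have hqs : q ≠ s := fun h => by rw [h, hs] at hq; omega
    set e := ordCompl[s] (ordCompl[p] n) with hedef
    set f := ordCompl[s] (ordCompl[q] n) with hfdef
    have heD : e ∣ n := (Nat.ordCompl_dvd _ s).trans (Nat.ordCompl_dvd n p)
    have hfD : f ∣ n := (Nat.ordCompl_dvd _ s).trans (Nat.ordCompl_dvd n q)
    have he0 : e ≠ 0 := fun h' => hn0 (by simpa [h'] using heD)
    have hf0 : f ≠ 0 := fun h' => hn0 (by simpa [h'] using hfD)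
    have hefac : ∀ r, e.factorization r =
        if r = s then 0 else if r = p then 0 else n.factorization r := by
      intro r
      rw [hedef, Nat.factorization_ordCompl, Nat.factorization_ordCompl]
      rcases eq_or_ne r s with rfl | hrs
      · simp
      · rcases eq_or_ne r p with rfl | hrp
        · simp [Finsupp.erase_ne hrs]
        · simp [Finsupp.erase_ne hrs, Finsupp.erase_ne hrp, hrs, hrp]
    have hffac : ∀ r, f.factorization r =
        if r = s then 0 else if r = q then 0 else n.factorization r := by
      intro r
      rw [hfdef, Nat.factorization_ordCompl, Nat.factorization_ordCompl]
      rcases eq_or_ne r s with rfl | hrs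
      · simp
      · rcases eq_or_ne r q with rfl | hrq
        · simp [Finsupp.erase_ne hrs]
        · simp [Finsupp.erase_ne hrs, Finsupp.erase_ne hrq, hrs, hrq]
    have hsn1 : 0 < n.factorization s := ss.factorization_pos_of_dvd hn0 hsn
    refine ⟨e, f, heD, hfD, ?_, ?_, ?_, ?_⟩
    · intro hcon
      have := (Nat.factorization_le_iff_dvd hn0 (Nat.lcm_ne_zero he0 hf0)).mpr hcon s
      rw [lcm_fact he0 hf0, hefac, hffac] at this
      simp at this
      omega
    · intro hcon
      have := (Nat.factorization_le_iff_dvd hn0 (Nat.lcm_ne_zero hd0 he0)).mpr hcon p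
      rw [lcm_fact hd0 he0, hefac] at this
      simp [hps] at this
      omega
    · intro hcon
      have := (Nat.factorization_le_iff_dvd hn0 (Nat.lcm_ne_zero hd0 hf0)).mpr hcon q
      rw [lcm_fact hd0 hf0, hffac] at this
      simp [hqs] at this
      omega
    · rw [← Nat.factorization_le_iff_dvd hn0
        (Nat.lcm_ne_zero hd0 (Nat.lcm_ne_zero he0 hf0)), Finsupp.le_def]
      intro r
      rw [lcm_fact hd0 (Nat.lcm_ne_zero he0 hf0), lcm_fact he0 hf0, hefac, hffac]
      rcases eq_or_ne r s with rfl | hrs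
      · simp [hs.ge]
      · rcases eq_or_ne r p with rfl | hrp
        · simp [hrs, hpq, (Ne.symm hpq)]
        · rcases eq_or_ne r q with rfl | hrq
          · simp [hrs, hrp]
          · simp [hrs, hrp, hrq]

end nt


/-- An element `x` of a complete lattice is essential. -/
def IsEssential {L : Type*} [CompleteLattice L] (x : L) : Prop :=
  ∀ y : L, y ≠ ⊥ → x ⊓ y ≠ ⊥

/-- Characterization of μ-elements and essential elements of the lattice of
ideals of `ℤ/nℤ`, in terms of the `p`-adic valuations of `d = gcd l n` and `n`. -/
theorem isMuElement_ideal_zmod (n : ℕ) (hn : 2 ≤ n) (l : ℤ) (d : ℕ)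
    (hd : d = Int.gcd l n) (x : Ideal (ZMod n)) (hx : x = Ideal.span {(l : ZMod n)}) :
    (IsMuElement x ↔
      ¬ ∃ p q s : ℕ, p.Prime ∧ q.Prime ∧ s.Prime ∧ p ∣ n ∧ q ∣ n ∧ s ∣ n ∧ p ≠ q ∧
        padicValNat p d < padicValNat p n ∧ padicValNat q d < padicValNat q n ∧
        padicValNat s d = padicValNat s n) ∧
    (IsEssential x ↔
      ∀ p : ℕ, p.Prime → p ∣ n → padicValNat p d < padicValNat p n) := by
  have : NeZero n := ⟨by omega⟩
  have hdn : d ∣ n := by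
    have h1 : Int.gcd l n ∣ (n : ℤ).natAbs := Nat.gcd_dvd_right _ _
    rw [hd]; simpa using h1
  have hxd : x = Ideal.span {(d : ZMod n)} := by
    rw [hx, span_intCast_eq_gcd, ← hd]
  constructor
  · -- μ-element part
    rw [show (∃ p q s : ℕ, p.Prime ∧ q.Prime ∧ s.Prime ∧ p ∣ n ∧ q ∣ n ∧ s ∣ n ∧ p ≠ q ∧
        padicValNat p d < padicValNat p n ∧ padicValNat q d < padicValNat q n ∧
        padicValNat s d = padicValNat s n) ↔
        (∃ p q s : ℕ, p.Prime ∧ q.Prime ∧ s.Prime ∧ p ∣ n ∧ q ∣ n ∧ s ∣ n ∧ p ≠ q ∧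
        d.factorization p < n.factorization p ∧ d.factorization q < n.factorization q ∧
        d.factorization s = n.factorization s) from by
      constructor
      · rintro ⟨p, q, s, pp, qq, ss, h1, h2, h3, h4, h5, h6, h7⟩
        refine ⟨p, q, s, pp, qq, ss, h1, h2, h3, h4, ?_, ?_, ?_⟩
        · rw [Nat.factorization_def d pp, Nat.factorization_def n pp]; exact h5
        · rw [Nat.factorization_def d qq, Nat.factorization_def n qq]; exact h6
        · rw [Nat.factorization_def d ss, Nat.factorization_def n ss]; exact h7
      · rintro ⟨p, q, s, pp, qq, ss, h1, h2, h3, h4, h5, h6, h7⟩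
        refine ⟨p, q, s, pp, qq, ss, h1, h2, h3, h4, ?_, ?_, ?_⟩
        · rw [← Nat.factorization_def d pp, ← Nat.factorization_def n pp]; exact h5
        · rw [← Nat.factorization_def d qq, ← Nat.factorization_def n qq]; exact h6
        · rw [← Nat.factorization_def d ss, ← Nat.factorization_def n ss]; exact h7]
    rw [← nt_mu hn hdn]
    constructor
    · rintro h ⟨e, f, he, hf, h1, h2, h3, h4⟩
      have key := h (Ideal.span {(e : ZMod n)}) (Ideal.span {(f : ZMod n)}) ?_ ?_ ?_
      · refine key ?_
        rw [hxd, span_inf_span he hf, span_inf_span hdn (Nat.lcm_dvd he hf),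
          span_nat_eq_bot]
        exact h4
      · rw [span_inf_span he hf]
        simp only [ne_eq, span_nat_eq_bot]
        exact h1
      · rw [hxd, span_inf_span hdn he]
        simp only [ne_eq, span_nat_eq_bot]
        exact h2
      · rw [hxd, span_inf_span hdn hf]
        simp only [ne_eq, span_nat_eq_bot]
        exact h3
    · intro h y z hyz hxy hxz
      obtain ⟨e, he, rfl⟩ := exists_span_divisor y
      obtain ⟨f, hf, rfl⟩ := exists_span_divisor z
      rw [span_inf_span he hf] at hyz ⊢
      rw [hxd] at hxy hxz ⊢
      rw [span_inf_span hdn he] at hxy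
      rw [span_inf_span hdn hf] at hxz
      rw [span_inf_span hdn (Nat.lcm_dvd he hf)]
      simp only [ne_eq, span_nat_eq_bot] at hyz hxy hxz ⊢
      intro hcon
      exact h ⟨e, f, he, hf, hyz, hxy, hxz, hcon⟩
  · -- essential part
    rw [show (∀ p : ℕ, p.Prime → p ∣ n → padicValNat p d < padicValNat p n) ↔
        (∀ p : ℕ, p.Prime → p ∣ n → d.factorization p < n.factorization p) from by
      constructor
      · intro h p pp hp
        have := h p pp hp
        rwa [← Nat.factorization_def d pp, ← Nat.factorization_def n pp] at this
      · intro h p pp hp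
        have := h p pp hp
        rwa [Nat.factorization_def d pp, Nat.factorization_def n pp] at this]
    rw [← nt_essential hn hdn]
    constructor
    · intro h e he hne
      have hy : Ideal.span {(e : ZMod n)} ≠ (⊥ : Ideal (ZMod n)) := by
        simp only [ne_eq, span_nat_eq_bot]; exact hne
      have key := h _ hy
      rw [hxd, span_inf_span hdn he] at key
      simpa only [ne_eq, span_nat_eq_bot] using key
    · intro h y hy
      obtain ⟨e, he, rfl⟩ := exists_span_divisor y
      have hne : ¬ n ∣ e := by simpa only [ne_eq, span_nat_eq_bot] using hy
      rw [hxd, span_inf_span hdn he]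
      simpa only [ne_eq, span_nat_eq_bot] using h e he hne
end

section
/- Let X be a topological space and let U be an open subset of X, regarded as an element of the frame of open sets of X (ordered by inclusion, with bottom the empty set and meet given by intersection). Then U is a μ-element of the frame of open sets if and only if U is dense in X or U is preirreducible (any two nonempty open subsets of X that meet U have intersections with U that intersect each other; equivalently, for all open V, W ⊆ U, if V and W are nonempty then V ∩ W is nonempty). Moreover, U is an essential element of the frame of open sets if and only if U is dense in X. -/
open TopologicalSpace

lemma opens_ne_bot_iff {X : Type*} [TopologicalSpace X] (V : Opens X) :
    V ≠ ⊥ ↔ (V : Set X).Nonempty := by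
  rw [Set.nonempty_iff_ne_empty, ← Opens.coe_bot, ne_eq, ne_eq, ← SetLike.coe_set_eq]

/-- An open subset `U` of a topological space `X` is a μ-element of the
frame of open sets iff `U` is dense or preirreducible; and `U` is essential iff `U` is
dense. -/
theorem isMuElement_opens {X : Type*} [TopologicalSpace X] (U : Opens X) :
    (IsMuElement U ↔ Dense (U : Set X) ∨ IsPreirreducible (U : Set X)) ∧
    (IsEssential U ↔ Dense (U : Set X)) := by
  have hess : IsEssential U ↔ Dense (U : Set X) := by
    rw [dense_iff_inter_open]
    constructor
    · intro h V hV hVne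
      have := h ⟨V, hV⟩ ((opens_ne_bot_iff _).2 hVne)
      rw [opens_ne_bot_iff, Opens.coe_inf] at this
      exact Set.inter_comm _ _ ▸ this
    · intro h V hVne
      rw [opens_ne_bot_iff] at hVne ⊢
      rw [Opens.coe_inf]
      exact Set.inter_comm _ _ ▸ h V V.2 hVne
  refine ⟨?_, hess⟩
  constructor
  · intro hmu
    by_cases hd : Dense (U : Set X)
    · exact Or.inl hd
    · right
      rw [dense_iff_inter_open] at hd
      push_neg at hd
      obtain ⟨W, hWopen, hWne, hWU⟩ := hd
      intro v z hv hz hUv hUz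
      set W' : Opens X := ⟨W, hWopen⟩
      set V : Opens X := ⟨v, hv⟩
      set Z : Opens X := ⟨z, hz⟩
      have h1 : (V ⊔ W') ⊓ (Z ⊔ W') ≠ ⊥ := by
        rw [opens_ne_bot_iff]
        obtain ⟨w, hw⟩ := hWne
        exact ⟨w, Or.inr hw, Or.inr hw⟩
      have h2 : U ⊓ (V ⊔ W') ≠ ⊥ := by
        rw [opens_ne_bot_iff]
        obtain ⟨x, hxU, hxv⟩ := hUv
        exact ⟨x, hxU, Or.inl hxv⟩
      have h3 : U ⊓ (Z ⊔ W') ≠ ⊥ := by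
        rw [opens_ne_bot_iff]
        obtain ⟨x, hxU, hxz⟩ := hUz
        exact ⟨x, hxU, Or.inl hxz⟩
      have := hmu _ _ h1 h2 h3
      rw [opens_ne_bot_iff] at this
      obtain ⟨x, hxU, hx1, hx2⟩ := this
      have hxW : x ∉ W := fun hxW => by
        have : x ∈ W ∩ (U : Set X) := ⟨hxW, hxU⟩
        rw [hWU] at this; exact this
      exact ⟨x, hxU, hx1.resolve_right hxW, hx2.resolve_right hxW⟩
  · rintro (hd | hp) y z hyz hUy hUz
    · rw [opens_ne_bot_iff] at hyz ⊢
      have := (dense_iff_inter_open.1 hd) (↑(y ⊓ z)) (y ⊓ z).2 hyz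
      rw [Opens.coe_inf] at this ⊢
      exact Set.inter_comm _ _ ▸ this
    · rw [opens_ne_bot_iff] at hUy hUz ⊢
      rw [Opens.coe_inf] at hUy hUz ⊢
      have := hp ↑y ↑z y.2 z.2 hUy hUz
      simpa using this
end

section
/- Let L be a complete lattice that is modular. An element x of L is a μ-element if and only if x is essential or x is irreducible (i.e. for all y, z ∈ L with y ≤ x, z ≤ x, and y ⊓ z = ⊥, one has y = ⊥ or z = ⊥). -/
/-- In a modular complete lattice, `x` is a μ-element iff `x` is essential
or irreducible. -/
theorem isMuElement_iff_essential_or_irreducible {L : Type*} [CompleteLattice L]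
    (hmod : ∀ a b c : L, a ≤ c → a ⊔ (b ⊓ c) = (a ⊔ b) ⊓ c) (x : L) :
    IsMuElement x ↔
      (∀ y : L, y ≠ ⊥ → x ⊓ y ≠ ⊥) ∨
      (∀ y z : L, y ≤ x → z ≤ x → y ⊓ z = ⊥ → y = ⊥ ∨ z = ⊥) := by
  constructor
  · intro hμ
    by_cases hess : ∀ y : L, y ≠ ⊥ → x ⊓ y ≠ ⊥
    · exact Or.inl hess
    · right
      push_neg at hess
      obtain ⟨w, hw0, hxw⟩ := hess
      intro y z hyx hzx hyz
      by_contra h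
      push_neg at h
      obtain ⟨hy0, hz0⟩ := h
      have h1 : x ⊓ (y ⊔ w) = y := by
        have := hmod y w x hyx
        rw [inf_comm w x, hxw, sup_bot_eq] at this
        rw [inf_comm, ← this]
      have h2 : x ⊓ (z ⊔ w) = z := by
        have := hmod z w x hzx
        rw [inf_comm w x, hxw, sup_bot_eq] at this
        rw [inf_comm, ← this]
      have hnb : (y ⊔ w) ⊓ (z ⊔ w) ≠ ⊥ := by
        intro hb
        exact hw0 (le_bot_iff.mp (hb ▸ le_inf le_sup_right le_sup_right))
      have := hμ (y ⊔ w) (z ⊔ w) hnb (by rw [h1]; exact hy0) (by rw [h2]; exact hz0)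
      apply this
      have key : x ⊓ ((y ⊔ w) ⊓ (z ⊔ w)) = y ⊓ (z ⊔ w) := by
        rw [← inf_assoc, h1]
      rw [key]
      apply le_bot_iff.mp
      calc y ⊓ (z ⊔ w) ≤ y ⊓ (x ⊓ (z ⊔ w)) :=
            le_inf inf_le_left (le_inf (le_trans inf_le_left hyx) inf_le_right)
        _ = y ⊓ z := by rw [h2]
        _ = ⊥ := hyz
  · rintro (hess | hirr)
    · intro y z hyz _ _
      exact hess (y ⊓ z) hyz
    · intro y z _ hxy hxz hb
      rcases hirr (x ⊓ y) (x ⊓ z) inf_le_left inf_le_left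
          (by rw [← inf_inf_distrib_left, hb]) with h | h
      · exact hxy h
      · exact hxz h
end

section
/- Let L be a complete lattice that is modular and let x ∈ L with x ≠ ⊤. Then x is μ-closed in L if and only if x is essentially closed in L and x is not irreducible. (Moreover, x = ⊤ is always both μ-closed and essentially closed.) -/
/-- `x` is μ-closed in `L`. -/
def IsMuClosed {L : Type*} [CompleteLattice L] (x : L) : Prop :=
  ∀ b : L, x ≤ b → IsMuElementBelow x b → x = b

/-- `x` is essentially closed in `L`. -/
def IsEssentiallyClosed {L : Type*} [CompleteLattice L] (x : L) : Prop :=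
  ∀ b : L, x ≤ b → (∀ y : L, y ≤ b → y ≠ ⊥ → x ⊓ y ≠ ⊥) → x = b

/-- `x` is irreducible. -/
def IsIrreducibleElem {L : Type*} [CompleteLattice L] (x : L) : Prop :=
  ∀ y z : L, y ≤ x → z ≤ x → y ⊓ z = ⊥ → y = ⊥ ∨ z = ⊥

/-- In a modular complete lattice, `x ≠ ⊤` is μ-closed iff it is essentially
closed and not irreducible; moreover `⊤` is both μ-closed and essentially closed. -/
theorem isMuClosed_iff {L : Type*} [CompleteLattice L]
    (hmod : ∀ a b c : L, a ≤ c → a ⊔ (b ⊓ c) = (a ⊔ b) ⊓ c) :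
    (∀ x : L, x ≠ ⊤ →
      (IsMuClosed x ↔ IsEssentiallyClosed x ∧ ¬ IsIrreducibleElem x)) ∧
    (IsMuClosed (⊤ : L) ∧ IsEssentiallyClosed (⊤ : L)) := by
  constructor
  · intro x hx
    constructor
    · intro hmu
      constructor
      · -- essentially closed
        intro b hxb hess
        exact hmu b hxb (fun y z hy hz hyz hxy hxz =>
          hess (y ⊓ z) (le_trans inf_le_left hy) hyz)
      · -- not irreducible
        intro hirr
        apply hx
        apply hmu ⊤ le_top
        intro y z _ _ hyz hxy hxz
        have key : x ⊓ (y ⊓ z) = (x ⊓ y) ⊓ (x ⊓ z) := by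
          rw [inf_inf_distrib_left]
        rw [key]
        intro h
        rcases hirr (x ⊓ y) (x ⊓ z) inf_le_left inf_le_left h with h' | h'
        · exact hxy h'
        · exact hxz h'
    · rintro ⟨hess, hirr⟩ b hxb hmu
      -- get u v ≤ x, u ⊓ v = ⊥, u ≠ ⊥, v ≠ ⊥
      rw [IsIrreducibleElem] at hirr; push_neg at hirr
      obtain ⟨u, v, hux, hvx, huv, hu, hv⟩ := hirr
      apply hess b hxb
      intro y hy hyne
      intro hxy
      have h1 : x ⊓ (u ⊔ y) = u := by
        have := hmod u y x hux
        rw [inf_comm y x, hxy, sup_bot_eq] at this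
        rw [inf_comm]; exact this.symm
      have h2 : x ⊓ (v ⊔ y) = v := by
        have := hmod v y x hvx
        rw [inf_comm y x, hxy, sup_bot_eq] at this
        rw [inf_comm]; exact this.symm
      have hbad : x ⊓ ((u ⊔ y) ⊓ (v ⊔ y)) = ⊥ := by
        rw [inf_inf_distrib_left, h1, h2, huv]
      refine hmu (u ⊔ y) (v ⊔ y) (sup_le (hux.trans hxb) hy)
        (sup_le (hvx.trans hxb) hy) ?_ ?_ ?_ hbad
      · intro h
        exact hyne (le_bot_iff.mp (h ▸ le_inf le_sup_right le_sup_right))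
      · rw [h1]; exact hu
      · rw [h2]; exact hv
  · constructor
    · intro b hb _; exact le_antisymm hb le_top
    · intro b hb _; exact le_antisymm hb le_top
end
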